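/- Diagonal transfer function criterion (the computation underlying equations (30)–(34)). Let M ∈ ℝ^{n×n}, B̂ ∈ ℝ^{n×p}, C ∈ ℝ^{p×n}, and let d₁, …, d_p be positive integers such that for each i ∈ {1,…,p}: C_i M^k B̂ = 0 for all 0 ≤ k < d_i − 1, C_i M^{d_i−1} B̂ = e_iᵀ (the i-th standard basis row vector of ℝ^{1×p}), and C_i M^{d_i} = 0. Then over ℝ(s) the transfer function C (sI − M)⁻¹ B̂ equals the diagonal matrix diag(s^{−d_1}, …, s^{−d_p}). -/

import Mathlib

noncomputable section
open Matrix

/-- Entrywise embedding of a real matrix into matrices over the field ℝ(s). -/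
noncomputable def toRat {k l : ℕ} (M : Matrix (Fin k) (Fin l) ℝ) :
    Matrix (Fin k) (Fin l) (RatFunc ℝ) :=
  M.map (algebraMap ℝ (RatFunc ℝ))

/-- The matrix `s I - M` over ℝ(s). -/
noncomputable def sIm {k : ℕ} (M : Matrix (Fin k) (Fin k) ℝ) :
    Matrix (Fin k) (Fin k) (RatFunc ℝ) :=
  Matrix.scalar (Fin k) (RatFunc.X : RatFunc ℝ) - toRat M

/-! Since `Cᵢ M^{dᵢ} = 0`, the resolvent series `Cᵢ (sI - M)⁻¹ = ∑ₖ s^{-(k+1)} Cᵢ Mᵏ` terminates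
after `dᵢ` terms (multiplying the finite sum by `sI - M` telescopes to `Cᵢ`). Multiplying by `B̂`,
the hypotheses kill every term except `k = dᵢ - 1`, which contributes `s^{-dᵢ} eᵢᵀ`. -/

open Finset

namespace Matrix

variable {K ι : Type*} [Field K] [Fintype ι] [DecidableEq ι]

theorem sum_inv_pow_smul_vecMul_pow_vecMul_scalar_sub (A : Matrix ι ι K) (v : ι → K) {x : K}
    (hx : x ≠ 0) {d : ℕ} (hd : v ᵥ* A ^ d = 0) :
    (∑ k ∈ range d, (x ^ (k + 1))⁻¹ • (v ᵥ* A ^ k)) ᵥ* (scalar ι x - A) = v := by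
  have step (k : ℕ) : ((x ^ (k + 1))⁻¹ • (v ᵥ* A ^ k)) ᵥ* (scalar ι x - A) =
      (x ^ k)⁻¹ • (v ᵥ* A ^ k) - (x ^ (k + 1))⁻¹ • (v ᵥ* A ^ (k + 1)) := by
    have hscalar : (v ᵥ* A ^ k) ᵥ* scalar ι x = x • (v ᵥ* A ^ k) := by
      ext j; simp [vecMul_diagonal, mul_comm]
    have hinv : (x ^ (k + 1))⁻¹ * x = (x ^ k)⁻¹ := by
      rw [pow_succ, mul_inv, inv_mul_cancel_right₀ hx]
    rw [smul_vecMul, vecMul_sub, hscalar, vecMul_vecMul, ← pow_succ, smul_sub, smul_smul, hinv]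
  rw [sum_vecMul, sum_congr rfl fun k _ => step k, sum_range_sub']
  simp [hd]

theorem vecMul_inv_scalar_sub_eq_sum (A : Matrix ι ι K) (v : ι → K) {x : K}
    (hx : x ≠ 0) {d : ℕ} (hd : v ᵥ* A ^ d = 0) (hdet : IsUnit (scalar ι x - A).det) :
    v ᵥ* (scalar ι x - A)⁻¹ = ∑ k ∈ range d, (x ^ (k + 1))⁻¹ • (v ᵥ* A ^ k) := by
  conv_lhs => rw [← sum_inv_pow_smul_vecMul_pow_vecMul_scalar_sub A v hx hd]
  rw [vecMul_vecMul, mul_nonsing_inv _ hdet, vecMul_one]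

end Matrix

theorem sIm_eq_mapMatrix_charmatrix {k : ℕ} (M : Matrix (Fin k) (Fin k) ℝ) :
    sIm M = (algebraMap (Polynomial ℝ) (RatFunc ℝ)).mapMatrix (charmatrix M) := by
  ext i j
  by_cases h : i = j <;> simp [sIm, toRat, charmatrix, h]

theorem isUnit_det_sIm {k : ℕ} (M : Matrix (Fin k) (Fin k) ℝ) : IsUnit (sIm M).det := by
  rw [sIm_eq_mapMatrix_charmatrix, ← RingHom.map_det, isUnit_iff_ne_zero,
    map_ne_zero_iff _ (RatFunc.algebraMap_injective ℝ)]
  exact (charpoly_monic M).ne_zero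

theorem toRat_mul {k l m : ℕ} (A : Matrix (Fin k) (Fin l) ℝ) (B : Matrix (Fin l) (Fin m) ℝ) :
    toRat (A * B) = toRat A * toRat B :=
  Matrix.map_mul

theorem toRat_pow {k : ℕ} (A : Matrix (Fin k) (Fin k) ℝ) (e : ℕ) :
    toRat (A ^ e) = toRat A ^ e :=
  Matrix.map_pow A _ e

theorem toRat_row {k l : ℕ} (A : Matrix (Fin k) (Fin l) ℝ) (i : Fin k) :
    toRat A i = algebraMap ℝ (RatFunc ℝ) ∘ A i :=
  rfl

theorem toRat_mul_inv_sIm_row {p n : ℕ} (C : Matrix (Fin p) (Fin n) ℝ)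
    (M : Matrix (Fin n) (Fin n) ℝ) (i : Fin p) {d : ℕ} (hd : (C * M ^ d) i = 0) :
    (toRat C * (sIm M)⁻¹) i =
      ∑ k ∈ range d, ((RatFunc.X : RatFunc ℝ) ^ (k + 1))⁻¹ • toRat (C * M ^ k) i := by
  have hrow (e : ℕ) : toRat C i ᵥ* toRat M ^ e = toRat (C * M ^ e) i := by
    rw [← mul_apply_eq_vecMul, toRat_mul, toRat_pow]
  rw [mul_apply_eq_vecMul]
  simp only [← hrow]
  refine vecMul_inv_scalar_sub_eq_sum _ _ RatFunc.X_ne_zero ?_ (isUnit_det_sIm M)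
  rw [hrow, toRat_row, hd]
  ext; simp

/-- Diagonal transfer function criterion (the computation underlying equations
(30)–(34)): if for each `i`, `Cᵢ M^k B̂ = 0` for `0 ≤ k < dᵢ - 1`,
`Cᵢ M^{dᵢ-1} B̂ = eᵢᵀ`, and `Cᵢ M^{dᵢ} = 0`, then
`C (sI - M)⁻¹ B̂ = diag (s^{-d 1}, …, s^{-d p})`. -/
theorem diagonal_transfer_function_criterion
    (n p : ℕ) (M : Matrix (Fin n) (Fin n) ℝ) (Bhat : Matrix (Fin n) (Fin p) ℝ)
    (C : Matrix (Fin p) (Fin n) ℝ) (d : Fin p → ℕ) (hd1 : ∀ i, 1 ≤ d i)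
    (hzero : ∀ i : Fin p, ∀ k : ℕ, k < d i - 1 →
      (fun j => (C * M ^ k * Bhat) i j) = 0)
    (hone : ∀ i : Fin p,
      (fun j => (C * M ^ (d i - 1) * Bhat) i j) = fun j => if j = i then (1 : ℝ) else 0)
    (hend : ∀ i : Fin p, (fun l => (C * M ^ (d i)) i l) = 0) :
    toRat C * (sIm M)⁻¹ * toRat Bhat =
      Matrix.diagonal fun i => ((RatFunc.X : RatFunc ℝ) ^ d i)⁻¹ := by
  funext i
  have hCMd : (C * M ^ d i) i = 0 := hend i
  obtain ⟨m, hm⟩ : ∃ m, d i = m + 1 := ⟨d i - 1, by have := hd1 i; omega⟩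
  calc (toRat C * (sIm M)⁻¹ * toRat Bhat) i
      = ∑ k ∈ range (d i),
          ((RatFunc.X : RatFunc ℝ) ^ (k + 1))⁻¹ • toRat (C * M ^ k * Bhat) i := by
        rw [mul_apply_eq_vecMul, toRat_mul_inv_sIm_row C M i hCMd, sum_vecMul]
        simp only [smul_vecMul, ← mul_apply_eq_vecMul, toRat_mul]
    _ = ((RatFunc.X : RatFunc ℝ) ^ d i)⁻¹ • toRat (C * M ^ (d i - 1) * Bhat) i := by
        rw [hm, sum_range_succ, sum_eq_zero, zero_add, Nat.add_sub_cancel]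
        intro k hk
        have hCMkB : (C * M ^ k * Bhat) i = 0 := hzero i k (by simp at hk; omega)
        rw [toRat_row, hCMkB]
        ext; simp
    _ = diagonal (fun i => ((RatFunc.X : RatFunc ℝ) ^ d i)⁻¹) i := by
        ext j
        have hCMB : (C * M ^ (d i - 1) * Bhat) i = fun j => if j = i then 1 else 0 := hone i
        rw [toRat_row, hCMB]
        by_cases h : j = i <;> simp [diagonal_apply, h, eq_comm]
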